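/- arXiv:2310.12898 — 9 statements merged into one kernel-verified Lean document; each statement's English description precedes it below -/
import Mathlib

section
/- Let V be a k×n matrix over a field F and A_1,...,A_ℓ ⊆ [n]. Then dim(V_{A_1} ∩ ... ∩ V_{A_ℓ}) = k + Σ_{i=1}^ℓ dim(V_{A_i}) − rank(G), where V_A denotes the column span of the columns of V indexed by A, and G is the block matrix with ℓ row blocks, whose i-th row block is [I_k | 0 ... 0 | V|_{A_i} | 0 ... 0] with V|_{A_i} placed in the (i+1)-th column block. -/
open Matrix

/-- Span of the columns of `V` indexed by the finite set `A`. -/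
noncomputable def colSpan {F : Type} [Field F] {k n : ℕ} (V : Matrix (Fin k) (Fin n) F)
    (A : Finset (Fin n)) : Submodule F (Fin k → F) :=
  Submodule.span F ((fun j => fun r => V r j) '' (A : Set (Fin n)))

/-- The block matrix `𝒢_{A_1,…,A_ℓ}[V]` with `ℓ` row blocks; row block `i` is
`[I_k | 0 … | V|_{A_i} | … 0]` with `V|_{A_i}` in the `(i+1)`-th column block. -/
def Gmat {F : Type} [Field F] {k n ℓ : ℕ} (V : Matrix (Fin k) (Fin n) F)
    (A : Fin ℓ → Finset (Fin n)) :
    Matrix (Fin ℓ × Fin k) (Fin k ⊕ (Σ i : Fin ℓ, {x // x ∈ A i})) F :=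
  Matrix.of fun p c =>
    match c with
    | Sum.inl c => if p.2 = c then (1 : F) else 0
    | Sum.inr q => if p.1 = q.1 then V p.2 q.2.1 else 0

namespace TianAux

variable (F : Type) [Field F] (k ℓ : ℕ)

/-- The diagonal embedding `x ↦ (x, x, …, x)`. -/
noncomputable def dmap : (Fin k → F) →ₗ[F] (Fin ℓ × Fin k → F) :=
  LinearMap.funLeft F F Prod.snd

/-- The embedding into block `i`. -/
def emap (i : Fin ℓ) : (Fin k → F) →ₗ[F] (Fin ℓ × Fin k → F) where
  toFun x p := if p.1 = i then x p.2 else 0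
  map_add' x y := by ext p; by_cases h : p.1 = i <;> simp [h]
  map_smul' c x := by ext p; by_cases h : p.1 = i <;> simp [h]

/-- Projection onto block `i`. -/
noncomputable def pmap (i : Fin ℓ) : (Fin ℓ × Fin k → F) →ₗ[F] (Fin k → F) :=
  LinearMap.funLeft F F (fun c => (i, c))

theorem sum_emap_pmap (f : Fin ℓ × Fin k → F) :
    ∑ i, emap F k ℓ i (pmap F k ℓ i f) = f := by
  ext p
  simp only [emap, pmap, LinearMap.funLeft, LinearMap.coe_mk, AddHom.coe_mk,
    Finset.sum_apply, Function.comp]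
  rw [Finset.sum_ite_eq (Finset.univ) p.1 (fun i => f (i, p.2))]
  simp

/-- The "blockwise" submodule `P`. -/
noncomputable def blockSub (S : Fin ℓ → Submodule F (Fin k → F)) :
    Submodule F (Fin ℓ × Fin k → F) :=
  ⨅ i, (S i).comap (pmap F k ℓ i)

/-- `P` is linearly equivalent to the product of the `S i`. -/
noncomputable def blockEquiv (S : Fin ℓ → Submodule F (Fin k → F)) :
    blockSub F k ℓ S ≃ₗ[F] (Π i, S i) where
  toFun f := fun i => ⟨pmap F k ℓ i f.1, by
    have := f.2
    simp only [blockSub, Submodule.mem_iInf, Submodule.mem_comap] at this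
    exact this i⟩
  map_add' f g := rfl
  map_smul' c f := rfl
  invFun g := ⟨fun p => (g p.1).1 p.2, by
    simp only [blockSub, Submodule.mem_iInf, Submodule.mem_comap]
    intro i
    exact (g i).2⟩
  left_inv f := rfl
  right_inv g := rfl

theorem finrank_blockSub (S : Fin ℓ → Submodule F (Fin k → F)) :
    Module.finrank F (blockSub F k ℓ S) = ∑ i, Module.finrank F (S i) := by
  rw [(blockEquiv F k ℓ S).finrank_eq]
  exact Module.finrank_pi_fintype F

theorem pmap_emap_same (i : Fin ℓ) (x : Fin k → F) :
    pmap F k ℓ i (emap F k ℓ i x) = x := by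
  ext c
  simp [pmap, emap, LinearMap.funLeft]

theorem pmap_emap_ne {i i' : Fin ℓ} (h : i ≠ i') (x : Fin k → F) :
    pmap F k ℓ i' (emap F k ℓ i x) = 0 := by
  ext c
  simp only [pmap, emap, LinearMap.funLeft, LinearMap.coe_mk, AddHom.coe_mk, Pi.zero_apply]
  simp only [Function.comp]
  rw [if_neg (fun h' => h h'.symm)]

theorem emap_mem_blockSub (S : Fin ℓ → Submodule F (Fin k → F)) (i : Fin ℓ)
    {x : Fin k → F} (hx : x ∈ S i) : emap F k ℓ i x ∈ blockSub F k ℓ S := by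
  simp only [blockSub, Submodule.mem_iInf, Submodule.mem_comap]
  intro i'
  by_cases h : i = i'
  · subst h
    rw [pmap_emap_same]
    exact hx
  · rw [pmap_emap_ne F k ℓ h]
    exact Submodule.zero_mem _

end TianAux

open TianAux

section Main

variable {F : Type} [Field F] {k n ℓ : ℕ} (V : Matrix (Fin k) (Fin n) F)
    (A : Fin ℓ → Finset (Fin n))

theorem range_Gmat :
    LinearMap.range (Gmat V A).mulVecLin
      = LinearMap.range (dmap F k ℓ) ⊔ blockSub F k ℓ (fun i => colSpan V (A i)) := by
  apply le_antisymm
  · rintro _ ⟨v, rfl⟩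
    have hdecomp : (Gmat V A).mulVecLin v
        = dmap F k ℓ (fun c => v (Sum.inl c))
          + ∑ i, emap F k ℓ i
              (∑ j : {x // x ∈ A i}, v (Sum.inr ⟨i, j⟩) • (fun r => V r j.1)) := by
      ext p
      simp only [mulVecLin_apply, mulVec, dotProduct, Fintype.sum_sum_type, Gmat, of_apply,
        dmap, emap, LinearMap.funLeft_apply, Function.comp, Pi.add_apply, Finset.sum_apply,
        LinearMap.coe_mk, AddHom.coe_mk, Pi.smul_apply, smul_eq_mul]
      congr 1
      · rw [Finset.sum_eq_single p.2] <;> simp +contextual [eq_comm]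
      · rw [← Finset.univ_sigma_univ, Finset.sum_sigma]
        apply Finset.sum_congr rfl
        intro i _
        by_cases h : p.1 = i <;> simp [h, mul_comm]
    rw [hdecomp]
    apply Submodule.add_mem
    · exact Submodule.mem_sup_left ⟨_, rfl⟩
    · apply Submodule.mem_sup_right
      apply Submodule.sum_mem
      intro i _
      apply emap_mem_blockSub
      apply Submodule.sum_mem
      intro j _
      exact Submodule.smul_mem _ _ (Submodule.subset_span ⟨j.1, j.2, rfl⟩)
  · apply sup_le
    · rintro _ ⟨x, rfl⟩
      refine ⟨Sum.elim x 0, ?_⟩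
      ext p
      simp [mulVecLin_apply, mulVec, dotProduct, Fintype.sum_sum_type, Gmat, dmap,
        LinearMap.funLeft, Function.comp,
        Finset.sum_ite_eq' Finset.univ p.2 (fun c => (1 : F) * x c)]
    · intro f hf
      have hdec := sum_emap_pmap F k ℓ f
      rw [← hdec]
      apply Submodule.sum_mem
      intro i _
      have hfi : pmap F k ℓ i f ∈ colSpan V (A i) := by
        simp only [blockSub, Submodule.mem_iInf, Submodule.mem_comap] at hf
        exact hf i
      -- the image of `colSpan` under `emap i` is inside the range
      have hmap : (colSpan V (A i)).map (emap F k ℓ i)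
          ≤ LinearMap.range (Gmat V A).mulVecLin := by
        rw [colSpan, Submodule.map_span, Submodule.span_le]
        rintro _ ⟨_, ⟨j, hj, rfl⟩, rfl⟩
        rw [Matrix.range_mulVecLin]
        apply Submodule.subset_span
        refine ⟨Sum.inr ⟨i, ⟨j, hj⟩⟩, ?_⟩
        ext p
        simp [Gmat, emap, Matrix.transpose_apply]
      exact hmap ⟨_, hfi, rfl⟩

theorem inf_eq_map_dmap :
    LinearMap.range (dmap F k ℓ) ⊓ blockSub F k ℓ (fun i => colSpan V (A i))
      = (⨅ i, colSpan V (A i)).map (dmap F k ℓ) := by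
  ext f
  simp only [Submodule.mem_inf, LinearMap.mem_range, Submodule.mem_map]
  constructor
  · rintro ⟨⟨x, rfl⟩, hf⟩
    refine ⟨x, ?_, rfl⟩
    rw [Submodule.mem_iInf]
    intro i
    simp only [blockSub, Submodule.mem_iInf, Submodule.mem_comap] at hf
    have := hf i
    have hx : pmap F k ℓ i (dmap F k ℓ x) = x := rfl
    rwa [hx] at this
  · rintro ⟨x, hx, rfl⟩
    refine ⟨⟨x, rfl⟩, ?_⟩
    simp only [blockSub, Submodule.mem_iInf, Submodule.mem_comap]
    intro i
    have hx' : pmap F k ℓ i (dmap F k ℓ x) = x := rfl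
    rw [hx']
    exact (Submodule.mem_iInf _).1 hx i

end Main

/-- Tian's rank formula:
`dim(V_{A_1} ∩ … ∩ V_{A_ℓ}) = k + Σᵢ dim(V_{A_i}) − rank 𝒢_{A_1,…,A_ℓ}[V]`. -/
theorem tian_rank_formula {F : Type} [Field F] {k n ℓ : ℕ}
    (V : Matrix (Fin k) (Fin n) F) (A : Fin ℓ → Finset (Fin n)) :
    Module.finrank F (⨅ i, colSpan V (A i) : Submodule F (Fin k → F)) + (Gmat V A).rank
      = k + ∑ i, Module.finrank F (colSpan V (A i)) := by
  rcases Nat.eq_zero_or_pos ℓ with hℓ | hℓ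
  · subst hℓ
    have hrank : (Gmat V A).rank = 0 := by
      have h := (Gmat V A).rank_le_card_height
      simpa using h
    have hinf : (⨅ i : Fin 0, colSpan V (A i)) = ⊤ := by
      simp
    rw [hrank, hinf]
    simp [Module.finrank_pi]
  -- main case
  have hinj : Function.Injective (dmap F k ℓ) := by
    apply LinearMap.funLeft_injective_of_surjective
    intro c
    exact ⟨(⟨0, hℓ⟩, c), rfl⟩
  have hrank : (Gmat V A).rank
      = Module.finrank F ((LinearMap.range (dmap F k ℓ)
          ⊔ blockSub F k ℓ (fun i => colSpan V (A i))) : Submodule F (Fin ℓ × Fin k → F)) := by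
    unfold Matrix.rank
    rw [range_Gmat V A]
  have hDk : Module.finrank F (LinearMap.range (dmap F k ℓ)) = k := by
    rw [LinearMap.finrank_range_of_inj hinj]
    simp [Module.finrank_pi]
  have hPsum : Module.finrank F (blockSub F k ℓ (fun i => colSpan V (A i)))
      = ∑ i, Module.finrank F (colSpan V (A i)) :=
    finrank_blockSub F k ℓ _
  have hinf : Module.finrank F ((LinearMap.range (dmap F k ℓ)
          ⊓ blockSub F k ℓ (fun i => colSpan V (A i))) : Submodule F (Fin ℓ × Fin k → F))
      = Module.finrank F (⨅ i, colSpan V (A i) : Submodule F (Fin k → F)) := by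
    rw [inf_eq_map_dmap V A]
    exact ((Submodule.equivMapOfInjective _ hinj _).finrank_eq).symm
  have hsum := Submodule.finrank_sup_add_finrank_inf_eq
    (LinearMap.range (dmap F k ℓ)) (blockSub F k ℓ (fun i => colSpan V (A i)))
  rw [hDk, hPsum, hinf] at hsum
  rw [hrank]
  omega
end

section
/- Let C be an (n,k)-linear code with generator matrix G and parity-check matrix H, and A_1,...,A_ℓ ⊆ [n]. Then dim(H_{A_1} ∩ ... ∩ H_{A_ℓ}) = n − k + Σ_{i=1}^ℓ rank(G|_{\bar A_i}) − rank(ℋ), where ℋ is the block matrix whose first row block is [I_n|_{\bar A_1}, ..., I_n|_{\bar A_ℓ}] and whose subsequent row blocks place G|_{\bar A_i} in the i-th column block. -/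
/-!
Write `D_i` for the coordinate subspace spanned by the `e_j`, `j ∈ A_i`. Since `H` is onto with
kernel `C`, `H_{A_i} = H(D_i + C)` and `dim ⋂ H_{A_i} = dim ⋂ (D_i + C) - k`. On the other side
`rank ℋ = rank ℋᵀ`, and a row vector `(v, u_1, …, u_ℓ)` is killed by `ℋ` iff `v + u_i G ∈ D_i`
for every `i`. Projecting this left kernel onto `v` gives `⋂ (D_i + C)`, with kernel the product of
the left kernels of the `G|_{\bar A_i}`, of dimension `Σ (k - rank G|_{\bar A_i})`. Rank–nullity
for `ℋᵀ` then gives the formula.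
-/

open Matrix

/-- The block matrix `ℋ_{A_1,…,A_ℓ}[G]`: column block `i` (indexed by `\bar A_i`)
consists of the columns of the `n×n` identity indexed by `\bar A_i` in the first row block,
stacked over `G|_{\bar A_i}` placed in the `(i+1)`-th row block, zeros elsewhere. -/
def Hmat {F : Type} [Field F] {k ℓ : ℕ} {ι : Type} [Fintype ι] [DecidableEq ι]
    (G : Matrix (Fin k) ι F) (A : Fin ℓ → Finset ι) :
    Matrix (ι ⊕ (Fin ℓ × Fin k)) (Σ i : Fin ℓ, {x // x ∈ (A i)ᶜ}) F :=
  Matrix.of fun r c =>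
    match r with
    | Sum.inl r => if r = c.2.1 then (1 : F) else 0
    | Sum.inr p => if p.1 = c.1 then G p.2 c.2.1 else 0

open Module Submodule
open LinearMap (ker range fst inr)

section RankNullity

variable {K V W : Type*} [DivisionRing K] [AddCommGroup V] [Module K V] [FiniteDimensional K V]
  [AddCommGroup W] [Module K W]

theorem Submodule.finrank_map_add_finrank_inf_ker (f : V →ₗ[K] W) (p : Submodule K V) :
    finrank K (p.map f) + finrank K ↥(p ⊓ ker f) = finrank K p := by
  have h := LinearMap.finrank_range_add_finrank_ker (f.domRestrict p)
  rwa [LinearMap.range_domRestrict, LinearMap.ker_domRestrict, ← finrank_map_subtype_eq,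
    map_comap_subtype] at h

theorem Submodule.finrank_comap_of_surjective {f : V →ₗ[K] W} (hf : Function.Surjective f)
    (q : Submodule K W) : finrank K (q.comap f) = finrank K q + finrank K (ker f) := by
  have h := (q.comap f).finrank_map_add_finrank_inf_ker f
  rwa [map_comap_eq_of_surjective hf, inf_eq_right.2 (LinearMap.ker_le_comap f), eq_comm] at h

theorem Submodule.finrank_iInf_map_add_finrank_ker {ι : Sort*} {f : V →ₗ[K] W}
    (hf : Function.Surjective f) (p : ι → Submodule K V) :
    finrank K ↥(⨅ i, (p i).map f) + finrank K (ker f) = finrank K ↥(⨅ i, p i ⊔ ker f) := by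
  have h : ⨅ i, p i ⊔ ker f = (⨅ i, (p i).map f).comap f := by
    simp only [comap_iInf, comap_map_eq]
  rw [h, finrank_comap_of_surjective hf]

theorem LinearMap.finrank_ker_eq_finrank_map_fst_add {U : Type*} [AddCommGroup U] [Module K U]
    [FiniteDimensional K U] (Φ : V × U →ₗ[K] W) :
    finrank K (ker Φ) = finrank K ((ker Φ).map (fst K V U)) + finrank K (ker (Φ ∘ₗ inr K V U)) := by
  rw [← (ker Φ).finrank_map_add_finrank_inf_ker (fst K V U), LinearMap.ker_fst, inf_comm,
    ← map_comap_eq, ← LinearMap.ker_comp]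
  exact congrArg _
    ((ker (Φ ∘ₗ inr K V U)).equivMapOfInjective _ LinearMap.inr_injective).finrank_eq.symm

end RankNullity

theorem Submodule.finrank_pi_univ {K ι : Type*} [DivisionRing K] [Fintype ι] {M : ι → Type*}
    [∀ i, AddCommGroup (M i)] [∀ i, Module K (M i)] [∀ i, FiniteDimensional K (M i)]
    (p : ∀ i, Submodule K (M i)) :
    finrank K (pi Set.univ p) = ∑ i, finrank K (p i) := by
  let e : pi Set.univ p ≃ₗ[K] ∀ i, p i :=
    { toFun x i := ⟨x.1 i, x.2 i trivial⟩
      invFun y := ⟨fun i => y i, fun i _ => (y i).2⟩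
      map_add' _ _ := rfl
      map_smul' _ _ := rfl
      left_inv _ := rfl
      right_inv _ := rfl }
  rw [e.finrank_eq, Module.finrank_pi_fintype]

theorem Matrix.rank_add_finrank_ker_vecMulLinear {K m n : Type*} [Field K] [Fintype m] [Fintype n]
    (M : Matrix m n K) : M.rank + finrank K (ker M.vecMulLinear) = Fintype.card m := by
  rw [← rank_transpose, rank, mulVecLin_transpose, LinearMap.finrank_range_add_finrank_ker,
    finrank_fintype_fun_eq_card]

theorem Pi.mem_span_basisFun_image_iff {K ι : Type*} [Semiring K] [Finite ι] {s : Set ι} {v : ι → K} :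
    v ∈ span K (Pi.basisFun K ι '' s) ↔ ∀ j ∉ s, v j = 0 := by
  rw [Basis.mem_span_image]
  simp [Set.subset_def, not_imp_comm]

theorem colSpan_eq_map {F : Type} [Field F] {k n : ℕ} (V : Matrix (Fin k) (Fin n) F)
    (A : Finset (Fin n)) : colSpan V A = (span F (Pi.basisFun F (Fin n) '' A)).map V.mulVecLin := by
  rw [colSpan, map_span, Set.image_image]
  refine congrArg _ (Set.image_congr fun j _ => ?_)
  rw [Pi.basisFun_apply, mulVecLin_apply, mulVec_single_one]
  rfl

theorem Submodule.mem_sup_range_iff {K U V : Type*} [Ring K] [AddCommGroup U] [Module K U]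
    [AddCommGroup V] [Module K V] {p : Submodule K V} {f : U →ₗ[K] V} {v : V} :
    v ∈ p ⊔ range f ↔ ∃ w, v + f w ∈ p := by
  rw [mem_sup]
  constructor
  · rintro ⟨d, hd, _, ⟨w, rfl⟩, rfl⟩
    exact ⟨-w, by simpa using hd⟩
  · rintro ⟨w, hw⟩
    exact ⟨_, hw, f (-w), LinearMap.mem_range_self f _, by simp⟩

section Hmat

variable {F : Type} [Field F] {k ℓ : ℕ} {ι : Type} [Fintype ι] [DecidableEq ι]
  (G : Matrix (Fin k) ι F) (A : Fin ℓ → Finset ι)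

/-- `y ᵥ* Hmat G A` for the row vector `y = (v, u)` split along the row blocks of `Hmat G A`,
`u i` being the part facing the `i`-th copy of `G`. -/
noncomputable def hmatVecMul :
    (ι → F) × (Fin ℓ → Fin k → F) →ₗ[F] ((Σ i : Fin ℓ, {x // x ∈ (A i)ᶜ}) → F) :=
  (Hmat G A).vecMulLinear ∘ₗ ((LinearEquiv.sumArrowLequivProdArrow _ _ F F).trans
    ((LinearEquiv.refl F _).prodCongr (LinearEquiv.curry F F _ _))).symm.toLinearMap

theorem hmatVecMul_apply (v : ι → F) (u : Fin ℓ → Fin k → F) (i : Fin ℓ)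
    (c : {x // x ∈ (A i)ᶜ}) : hmatVecMul G A (v, u) ⟨i, c⟩ = (v + u i ᵥ* G) c := by
  simp [hmatVecMul, vecMul, dotProduct, Hmat, Fintype.sum_sum_type, Fintype.sum_prod_type_right]

theorem rank_Hmat_eq_finrank_range : (Hmat G A).rank = finrank F (range (hmatVecMul G A)) := by
  rw [← rank_transpose, Matrix.rank, mulVecLin_transpose, hmatVecMul,
    LinearMap.range_comp_of_range_eq_top _ (LinearEquiv.range _)]

theorem mem_ker_hmatVecMul {v : ι → F} {u : Fin ℓ → Fin k → F} :
    (v, u) ∈ ker (hmatVecMul G A) ↔ ∀ i, v + u i ᵥ* G ∈ span F (Pi.basisFun F ι '' ↑(A i)) := by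
  simp only [LinearMap.mem_ker, Pi.mem_span_basisFun_image_iff, funext_iff, Sigma.forall,
    Subtype.forall, Finset.mem_compl, Finset.mem_coe, hmatVecMul_apply, Pi.zero_apply]

theorem map_fst_ker_hmatVecMul : (ker (hmatVecMul G A)).map (fst F _ _) =
    ⨅ i, span F (Pi.basisFun F ι '' ↑(A i)) ⊔ range G.vecMulLinear := by
  ext v
  simp only [mem_map, Prod.exists, LinearMap.fst_apply, exists_and_right, exists_eq_right,
    mem_ker_hmatVecMul, mem_iInf, mem_sup_range_iff, vecMulLinear_apply, Classical.skolem]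

theorem ker_hmatVecMul_comp_inr : ker (hmatVecMul G A ∘ₗ inr F _ _) =
    pi Set.univ fun i => ker (G.submatrix id (fun x : {x // x ∈ (A i)ᶜ} => x.1)).vecMulLinear := by
  ext u
  simp only [LinearMap.mem_ker, LinearMap.comp_apply, LinearMap.inr_apply, mem_pi, Set.mem_univ,
    true_imp_iff, funext_iff, Sigma.forall, hmatVecMul_apply, zero_add, vecMulLinear_apply,
    Pi.zero_apply]
  rfl

theorem rank_Hmat_add_finrank_iInf :
    (Hmat G A).rank + finrank F ↥(⨅ i, span F (Pi.basisFun F ι '' ↑(A i)) ⊔ range G.vecMulLinear)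
      = Fintype.card ι + ∑ i, (G.submatrix id (fun x : {x // x ∈ (A i)ᶜ} => x.1)).rank := by
  have h := LinearMap.finrank_range_add_finrank_ker (hmatVecMul G A)
  rw [LinearMap.finrank_ker_eq_finrank_map_fst_add, map_fst_ker_hmatVecMul, ker_hmatVecMul_comp_inr,
    finrank_pi_univ, finrank_prod, finrank_fintype_fun_eq_card, finrank_pi_fintype,
    ← rank_Hmat_eq_finrank_range] at h
  have hsum : ∑ i, (G.submatrix id (fun x : {x // x ∈ (A i)ᶜ} => x.1)).rank
      + ∑ i, finrank F (ker (G.submatrix id (fun x : {x // x ∈ (A i)ᶜ} => x.1)).vecMulLinear)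
      = ∑ _ : Fin ℓ, k := by
    rw [← Finset.sum_add_distrib]
    exact Finset.sum_congr rfl fun i _ => by
      simpa using
        rank_add_finrank_ker_vecMulLinear (G.submatrix id (fun x : {x // x ∈ (A i)ᶜ} => x.1))
  simp only [finrank_fin_fun] at h
  omega

end Hmat

theorem dual_inter_rank_general {F : Type} [Field F] {n k ℓ : ℕ}
    (C : Submodule F (Fin n → F)) (hC : Module.finrank F C = k)
    (G : Matrix (Fin k) (Fin n) F) (hG : Submodule.span F (Set.range G) = C)
    (H : Matrix (Fin (n - k)) (Fin n) F) (hH : ∀ x, x ∈ C ↔ H.mulVec x = 0)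
    (A : Fin ℓ → Finset (Fin n)) :
    Module.finrank F (⨅ i, colSpan H (A i) : Submodule F (Fin (n - k) → F))
        + (Hmat G A).rank
      = (n - k) + ∑ i, (G.submatrix id (fun x : {x // x ∈ (A i)ᶜ} => x.1)).rank := by
  have hker : ker H.mulVecLin = C := by
    ext x
    exact (hH x).symm
  have hrange : range G.vecMulLinear = C := by
    rw [range_vecMulLinear, ← hG]
    rfl
  have hk : k ≤ n := hC ▸ (finrank_le C).trans_eq (finrank_fin_fun F)
  have hsurj : Function.Surjective H.mulVecLin := by
    rw [← LinearMap.range_eq_top]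
    apply eq_top_of_finrank_eq
    have h := LinearMap.finrank_range_add_finrank_ker H.mulVecLin
    rw [hker, hC, finrank_fin_fun] at h
    rw [finrank_fin_fun]
    omega
  have hcol := finrank_iInf_map_add_finrank_ker hsurj
    fun i => span F (Pi.basisFun F (Fin n) '' ↑(A i))
  have hblock := rank_Hmat_add_finrank_iInf G A
  rw [← iInf_congr fun i => colSpan_eq_map H (A i), hker, hC] at hcol
  rw [hrange, Fintype.card_fin] at hblock
  omega

/-- Rank formula for the dual:
`dim(H_{A_1} ∩ … ∩ H_{A_ℓ}) = n − k + Σᵢ rank(G|_{\bar A_i}) − rank ℋ_{A_1,…,A_ℓ}[G]`. -/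
theorem dual_inter_rank {F : Type} [Field F] {n k ℓ : ℕ} (hk : k ≤ n)
    (C : Submodule F (Fin n → F)) (hC : Module.finrank F C = k)
    (G : Matrix (Fin k) (Fin n) F) (hG : Submodule.span F (Set.range G) = C)
    (H : Matrix (Fin (n - k)) (Fin n) F) (hH : ∀ x, x ∈ C ↔ H.mulVec x = 0)
    (A : Fin ℓ → Finset (Fin n)) :
    Module.finrank F (⨅ i, colSpan H (A i) : Submodule F (Fin (n - k) → F))
        + (Hmat G A).rank
      = (n - k) + ∑ i, (G.submatrix id (fun x : {x // x ∈ (A i)ᶜ} => x.1)).rank :=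
  dual_inter_rank_general C hC G hG H hH A
end

section
/- Let G ∈ F^{k×n} and A_1,...,A_ℓ ⊆ [n]. For any B ⊆ \bar A_1 ∪ ... ∪ \bar A_ℓ (where \bar A_i = [n]∖A_i), we have rank ℋ_{A_1,...,A_ℓ}[G] ≥ |B| + rank ℋ_{A_1∖B,...,A_ℓ∖B}[G|_{\bar B}], where the second matrix is formed from the matrix G with the columns in B deleted and the sets A_i ∖ B viewed inside [n]∖B. -/
/-!
For each `b ∈ B` pick an `i` with `b ∉ A_i`. Keeping the identity rows indexed by `B` and by
`[n] ∖ B` together with all `G`-rows, and the columns `(i, b)` so picked together with the columns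
`(i, x)`, `x ∉ B`, yields a submatrix of `ℋ_{A_1,…,A_ℓ}[G]` of block form `[[I, 0], [C, ℋ']]`,
where `ℋ'` is the punctured matrix. Such a matrix has rank `|B| + rank ℋ'`.
-/

open Matrix

namespace Submodule

variable {R M N : Type*} [Ring R] [AddCommGroup M] [AddCommGroup N] [Module R M] [Module R N]

def prodEquivProd (p : Submodule R M) (q : Submodule R N) : p.prod q ≃ₗ[R] p × q where
  toFun x := (⟨x.1.1, x.2.1⟩, ⟨x.1.2, x.2.2⟩)
  invFun x := ⟨(x.1.1, x.2.1), x.1.2, x.2.2⟩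
  map_add' _ _ := rfl
  map_smul' _ _ := rfl
  left_inv _ := rfl
  right_inv _ := rfl

end Submodule

namespace Matrix

variable {F : Type} [Field F] {m m' n n' : Type} [Fintype n] [Fintype n']

theorem rank_fromBlocks_zero_zero (A : Matrix m n F) (D : Matrix m' n' F) :
    (fromBlocks A 0 0 D).rank = A.rank + D.rank := by
  classical
  have hlin : (fromBlocks A 0 0 D).mulVecLin =
      (LinearEquiv.sumArrowLequivProdArrow m m' F F).symm.toLinearMap ∘ₗ
        A.mulVecLin.prodMap D.mulVecLin ∘ₗ
          (LinearEquiv.sumArrowLequivProdArrow n n' F F).toLinearMap := by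
    refine LinearMap.ext fun v => funext fun i => ?_
    cases i <;>
      simp [fromBlocks_mulVec, LinearEquiv.sumArrowLequivProdArrow, Equiv.sumArrowEquivProdArrow]
  rw [rank, hlin, LinearMap.range_comp, LinearMap.range_comp_of_range_eq_top _
    (LinearEquiv.range _), LinearEquiv.finrank_map_eq, LinearMap.range_prodMap,
    (Submodule.prodEquivProd _ _).finrank_eq, Module.finrank_prod, rank, rank]

theorem rank_eq_card_add_rank_toBlocks₂₂ [Fintype m] [Fintype m'] [DecidableEq m]
    (M : Matrix (m ⊕ m') (m ⊕ n') F) (h₁₁ : M.toBlocks₁₁ = 1) (h₁₂ : M.toBlocks₁₂ = 0) :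
    M.rank = Fintype.card m + M.toBlocks₂₂.rank := by
  classical
  set C := M.toBlocks₂₁
  set D := M.toBlocks₂₂
  have hfactor : M = fromBlocks (1 : Matrix m m F) 0 C (1 : Matrix m' m' F) *
      fromBlocks (1 : Matrix m m F) 0 0 D := by
    rw [fromBlocks_multiply, ← fromBlocks_toBlocks M, h₁₁, h₁₂]
    simp [C, D]
  have hunit : IsUnit (fromBlocks (1 : Matrix m m F) 0 C (1 : Matrix m' m' F)).det := by simp
  rw [hfactor, rank_mul_eq_right_of_isUnit_det _ _ hunit, rank_fromBlocks_zero_zero, rank_one]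

end Matrix

section Puncture

variable {F : Type} [Field F] {k ℓ : ℕ} {ι : Type} [Fintype ι] [DecidableEq ι]
  (G : Matrix (Fin k) ι F) (A : Fin ℓ → Finset ι) (B : Finset ι)

def puncturedSets : Fin ℓ → Finset {x // x ∈ Bᶜ} :=
  fun i => Finset.univ.filter fun x => x.1 ∈ A i

def punctureRows : {x // x ∈ B} ⊕ ({x // x ∈ Bᶜ} ⊕ Fin ℓ × Fin k) → ι ⊕ Fin ℓ × Fin k :=
  Sum.elim (fun b => Sum.inl b.1) (Sum.map Subtype.val id)

variable {A B} in
theorem val_mem_compl_of_mem_compl_puncturedSets {i : Fin ℓ} {x : {x // x ∈ Bᶜ}}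
    (hx : x ∈ (puncturedSets A B i)ᶜ) : x.1 ∈ (A i)ᶜ := by
  simpa [puncturedSets] using hx

def punctureCols (pick : {x // x ∈ B} → Fin ℓ) (hpick : ∀ b, b.1 ∈ (A (pick b))ᶜ) :
    {x // x ∈ B} ⊕ (Σ i, {x // x ∈ (puncturedSets A B i)ᶜ}) → Σ i, {x // x ∈ (A i)ᶜ} :=
  Sum.elim (fun b => ⟨pick b, b.1, hpick b⟩)
    (fun c => ⟨c.1, c.2.1.1, val_mem_compl_of_mem_compl_puncturedSets c.2.2⟩)

variable (pick : {x // x ∈ B} → Fin ℓ) (hpick : ∀ b, b.1 ∈ (A (pick b))ᶜ)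

theorem toBlocks₁₁_submatrix_punctureRows_punctureCols :
    ((Hmat G A).submatrix (punctureRows B) (punctureCols A B pick hpick)).toBlocks₁₁ = 1 := by
  ext b b'
  simp only [toBlocks₁₁, of_apply, submatrix_apply, punctureRows, punctureCols, Sum.elim_inl, Hmat,
    one_apply, Subtype.coe_inj]

theorem toBlocks₁₂_submatrix_punctureRows_punctureCols :
    ((Hmat G A).submatrix (punctureRows B) (punctureCols A B pick hpick)).toBlocks₁₂ = 0 := by
  ext b c
  have hne : b.1 ≠ c.2.1.1 := fun h => Finset.mem_compl.mp c.2.1.2 (h ▸ b.2)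
  simp only [toBlocks₁₂, of_apply, submatrix_apply, punctureRows, punctureCols, Sum.elim_inl,
    Sum.elim_inr, Hmat, if_neg hne, Matrix.zero_apply]

theorem toBlocks₂₂_submatrix_punctureRows_punctureCols :
    ((Hmat G A).submatrix (punctureRows B) (punctureCols A B pick hpick)).toBlocks₂₂ =
      Hmat (G.submatrix id Subtype.val) (puncturedSets A B) := by
  ext (x | p) c <;>
    simp only [toBlocks₂₂, of_apply, submatrix_apply, punctureRows, punctureCols, Sum.elim_inr,
      Sum.map_inl, Sum.map_inr, Hmat, Subtype.coe_inj, id]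

end Puncture

/-- For any `B ⊆ \bar A_1 ∪ … ∪ \bar A_ℓ`,
`rank ℋ_{A_1,…,A_ℓ}[G] ≥ |B| + rank ℋ_{A_1∖B,…,A_ℓ∖B}[G|_{\bar B}]`, where the second
matrix is formed from `G` with the columns in `B` deleted and the `A_i ∖ B` viewed in `[n]∖B`. -/
theorem Hmat_rank_puncture {F : Type} [Field F] {k n ℓ : ℕ}
    (G : Matrix (Fin k) (Fin n) F) (A : Fin ℓ → Finset (Fin n))
    (B : Finset (Fin n)) (hB : B ⊆ Finset.univ.biUnion fun i => (A i)ᶜ) :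
    B.card + (Hmat (G.submatrix id (fun x : {x // x ∈ Bᶜ} => x.1))
        (fun i => Finset.univ.filter fun x : {x // x ∈ Bᶜ} => x.1 ∈ A i)).rank
      ≤ (Hmat G A).rank := by
  have hcover : ∀ b : {x // x ∈ B}, ∃ i, b.1 ∈ (A i)ᶜ := fun b => by
    simpa using hB b.2
  choose pick hpick using hcover
  set M := (Hmat G A).submatrix (punctureRows B) (punctureCols A B pick hpick)
  calc B.card + (Hmat (G.submatrix id Subtype.val) (puncturedSets A B)).rank
      = M.rank := by
        rw [rank_eq_card_add_rank_toBlocks₂₂ M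
            (toBlocks₁₁_submatrix_punctureRows_punctureCols G A B pick hpick)
            (toBlocks₁₂_submatrix_punctureRows_punctureCols G A B pick hpick),
          toBlocks₂₂_submatrix_punctureRows_punctureCols, Fintype.card_coe]
    _ ≤ (Hmat G A).rank := rank_submatrix_le _ _ _
end

section
/- Let C ⊆ F^n be a linear code with parity-check matrix H. Suppose there exist a vector y ∈ F^n with Hy ≠ 0, sets A_1,...,A_{L+1} ⊆ [n], and vectors x_1,...,x_{L+1} ∈ F^n with supp(x_i) ⊆ A_i and H x_i = Hy for all i, such that the x_i are not all equal. Then there exist s ≥ 2 distinct codewords c_1,...,c_s ∈ C and a center z ∈ F^n with Σ_{i=1}^s wt(c_i − z) ≤ Σ over a partition P_1 ∪ ... ∪ P_s = [L+1] grouping equal x_j's of |∩_{j∈P_i} A_j|. In particular, if for all partitions P_1,...,P_s of [L+1] one has Σ_i |∩_{j∈P_i} A_j| ≤ (s−1)(n−k−d), then C fails to be (ρ, s−1) average-radius list-decodable for some s−1 ≤ L with radius ρ = (s−1)/s · (n−k−d)/n. -/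
/-- From `L+1` solutions `x_i` of `H x = H y` (with `H y ≠ 0`, `supp x_i ⊆ A_i`, not all `x_i`
equal) one obtains `s ≥ 2` distinct codewords at small average radius from some center, where
the bound is the sum of `|∩_{j ∈ P_i} A_j|` over the partition of `[L+1]` grouping equal `x_j`'s.
In particular, if every partition `P_1,…,P_s` of `[L+1]` satisfies
`Σᵢ |∩_{j∈P_i} A_j| ≤ (s−1)(n−k−d)`, then `C` fails `(ρ, s−1)` average-radius list-decoding
for some `s − 1 ≤ L` with `ρ = ((s−1)/s)·(n−k−d)/n`. -/
theorem ldmds_failure_of_null_intersection_failure {F : Type} [Field F] [DecidableEq F]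
    {n k d L : ℕ} (hk : k ≤ n) (hd : d ≤ n - k)
    (C : Submodule F (Fin n → F)) (hC : Module.finrank F C = k)
    (H : Matrix (Fin (n - k)) (Fin n) F) (hH : ∀ x, x ∈ C ↔ H.mulVec x = 0)
    (y : Fin n → F) (hy : H.mulVec y ≠ 0)
    (A : Fin (L + 1) → Finset (Fin n)) (x : Fin (L + 1) → Fin n → F)
    (hsupp : ∀ i j, x i j ≠ 0 → j ∈ A i)
    (hx : ∀ i, H.mulVec (x i) = H.mulVec y)
    (hne : ¬ ∀ i j, x i = x j) :
    (∃ (s : ℕ) (P : Fin s → Finset (Fin (L + 1))) (c : Fin s → Fin n → F) (z : Fin n → F),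
      2 ≤ s ∧
      (∀ i, (P i).Nonempty) ∧
      (∀ i₁ i₂, i₁ ≠ i₂ → Disjoint (P i₁) (P i₂)) ∧
      Finset.univ.biUnion P = Finset.univ ∧
      (∀ i j j', j ∈ P i → (j' ∈ P i ↔ x j = x j')) ∧
      (∀ i, c i ∈ C) ∧ Function.Injective c ∧
      ∑ i, hammingNorm (c i - z) ≤ ∑ i, ((P i).inf A).card) ∧
    ((∀ (s : ℕ) (P : Fin s → Finset (Fin (L + 1))),
        (∀ i, (P i).Nonempty) →
        (∀ i₁ i₂, i₁ ≠ i₂ → Disjoint (P i₁) (P i₂)) →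
        Finset.univ.biUnion P = Finset.univ →
        ∑ i, ((P i).inf A).card ≤ (s - 1) * (n - k - d)) →
      ∃ s : ℕ, 2 ≤ s ∧ s ≤ L + 1 ∧
        ∃ (c : Fin s → Fin n → F) (z : Fin n → F),
          (∀ i, c i ∈ C) ∧ Function.Injective c ∧
          ∑ i, hammingNorm (c i - z) ≤ (s - 1) * (n - k - d)) := by
  classical
  set V : Finset (Fin n → F) := Finset.univ.image x with hV
  set s := V.card with hscard
  let e : V ≃ Fin s := V.equivFin
  let v : Fin s → Fin n → F := fun i => (e.symm i : Fin n → F)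
  have hvmem : ∀ i, v i ∈ V := fun i => (e.symm i).2
  have hvinj : Function.Injective v := fun a b h => by
    simpa using e.symm.injective (Subtype.ext h)
  set P : Fin s → Finset (Fin (L + 1)) :=
    fun i => Finset.univ.filter (fun j => x j = v i) with hP
  have hmemP : ∀ i j, j ∈ P i ↔ x j = v i := by
    intro i j; simp [hP]
  have hs2 : 2 ≤ s := by
    push_neg at hne
    obtain ⟨i, j, hij⟩ := hne
    have : 1 < V.card := Finset.one_lt_card.mpr
      ⟨x i, Finset.mem_image_of_mem x (Finset.mem_univ i),
       x j, Finset.mem_image_of_mem x (Finset.mem_univ j), hij⟩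
    omega
  have hPne : ∀ i, (P i).Nonempty := by
    intro i
    obtain ⟨j, -, hj⟩ := Finset.mem_image.mp (hvmem i)
    exact ⟨j, (hmemP i j).mpr hj⟩
  have hPdisj : ∀ i₁ i₂, i₁ ≠ i₂ → Disjoint (P i₁) (P i₂) := by
    intro i₁ i₂ h12
    rw [Finset.disjoint_left]
    intro j h1 h2
    exact h12 (hvinj (((hmemP i₁ j).mp h1).symm.trans ((hmemP i₂ j).mp h2)))
  have hPcover : Finset.univ.biUnion P = Finset.univ := by
    ext j
    simp only [Finset.mem_biUnion, Finset.mem_univ, iff_true, true_and]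
    refine ⟨e ⟨x j, Finset.mem_image_of_mem x (Finset.mem_univ j)⟩, ?_⟩
    rw [hmemP]
    simp [v]
  have hPclass : ∀ i j j', j ∈ P i → (j' ∈ P i ↔ x j = x j') := by
    intro i j j' hj
    rw [hmemP] at hj ⊢
    rw [hj]
    exact ⟨fun h => h.symm, fun h => h.symm⟩
  let c : Fin s → Fin n → F := fun i => v i - y
  let z : Fin n → F := -y
  have hcz : ∀ i, c i - z = v i := by
    intro i; simp [c, z]
  have hcC : ∀ i, c i ∈ C := by
    intro i
    obtain ⟨j, -, hj⟩ := Finset.mem_image.mp (hvmem i)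
    rw [hH]
    show H.mulVec (v i - y) = 0
    rw [Matrix.mulVec_sub, ← hj, hx j, sub_self]
  have hcinj : Function.Injective c := fun a b h => by
    apply hvinj
    have : v a - y = v b - y := h
    simpa using congrArg (· + y) this
  have hbound : ∀ i, hammingNorm (c i - z) ≤ ((P i).inf A).card := by
    intro i
    rw [hcz]
    apply Finset.card_le_card
    show (Finset.univ.filter fun t => v i t ≠ 0) ≤ (P i).inf A
    apply Finset.le_inf
    intro j hj
    intro t ht
    have hvt : v i t ≠ 0 := (Finset.mem_filter.mp ht).2
    have hxj : x j = v i := (hmemP i j).mp hj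
    exact hsupp j t (by rw [hxj]; exact hvt)
  have hsum : ∑ i, hammingNorm (c i - z) ≤ ∑ i, ((P i).inf A).card :=
    Finset.sum_le_sum fun i _ => hbound i
  have hsL : s ≤ L + 1 := by
    have hinj : Function.Injective (fun i : Fin s => (hPne i).choose) := by
      intro a b hab
      by_contra hne'
      have h1 := (hPne a).choose_spec
      have h2 := (hPne b).choose_spec
      have hab' : (hPne a).choose = (hPne b).choose := hab
      exact Finset.disjoint_left.mp (hPdisj a b hne') (hab' ▸ h1) h2
    simpa using Fintype.card_le_of_injective _ hinj
  constructor
  · exact ⟨s, P, c, z, hs2, hPne, hPdisj, hPcover, hPclass, hcC, hcinj, hsum⟩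
  · intro hall
    exact ⟨s, hs2, hsL, c, z, hcC, hcinj,
      hsum.trans (hall s P hPne hPdisj hPcover)⟩
end

section
/- Let U ∈ F^{(m−a)×m} be a generator matrix of a code C_1 ⊆ F^m and V ∈ F^{(n−b)×n} a generator matrix of C_2 ⊆ F^n. An erasure pattern E ⊆ [m]×[n] is correctable by the tensor code C_1 ⊗ C_2 (i.e., the restriction map x ↦ x|_{\bar E} is injective on C_1 ⊗ C_2) if and only if the tensor products {U_i ⊗ V_j : (i,j) ∈ \bar E} span F^{m−a} ⊗ F^{n−b}, where U_i, V_j denote the i-th column of U and j-th column of V. -/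
/-!
Full row rank gives right inverses `U * R = 1` and `V * S = 1`. With them, a matrix whose columns
lie in the row space of `U` and whose rows lie in the row space of `V` is exactly a matrix
`Uᵀ * M * V`, and `M ↦ Uᵀ * M * V` is injective. So `E` is correctable iff no nonzero `M` has
`Uᵀ * M * V` vanishing off `E`. The `(i, j)` entry of `Uᵀ * M * V` is the Frobenius pairing of `M`
with `Uᵢ ⊗ Vⱼ`, and since this pairing is nondegenerate, "no nonzero `M` is orthogonal to all
`Uᵢ ⊗ Vⱼ` with `(i, j) ∉ E`" says exactly that these tensors span.
-/

open Matrix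

/-- Membership in the tensor code `C₁ ⊗ C₂`: an `m × n` matrix whose columns lie in the row
space of `U` (the code `C₁`) and whose rows lie in the row space of `V` (the code `C₂`). -/
def tensorMem {F : Type} [Field F] {m n ma nb : ℕ} (U : Matrix (Fin ma) (Fin m) F)
    (V : Matrix (Fin nb) (Fin n) F) (X : Matrix (Fin m) (Fin n) F) : Prop :=
  (∀ j, (fun i => X i j) ∈ Submodule.span F (Set.range U)) ∧
  (∀ i, (fun j => X i j) ∈ Submodule.span F (Set.range V))

namespace Matrix

variable {F : Type*} [Field F] {k l m n : Type*}

theorem exists_mul_eq_one_of_rank_eq_card [Fintype k] [Fintype m] [DecidableEq k]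
    {U : Matrix k m F} (hU : U.rank = Fintype.card k) : ∃ R : Matrix m k F, U * R = 1 := by
  classical
  have hsurj : LinearMap.range U.mulVecLin = ⊤ :=
    Submodule.eq_top_of_finrank_eq (by rw [← rank, hU, Module.finrank_fintype_fun_eq_card])
  obtain ⟨g, hg⟩ := U.mulVecLin.exists_rightInverse_of_surjective hsurj
  refine ⟨LinearMap.toMatrix' g, toLin'.injective ?_⟩
  rw [toLin'_mul, toLin'_toMatrix', toLin'_apply', hg, toLin'_one]

theorem mem_span_range_iff_exists_vecMul [Fintype l] {V : Matrix l n F} {v : n → F} :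
    v ∈ Submodule.span F (Set.range V) ↔ ∃ c, c ᵥ* V = v := by
  change v ∈ Submodule.span F (Set.range V.row) ↔ _
  rw [← range_vecMulLinear]
  rfl

theorem forall_mem_span_range_iff_exists_mul [Fintype l] {V : Matrix l n F} {X : Matrix m n F} :
    (∀ i, X i ∈ Submodule.span F (Set.range V)) ↔ ∃ B : Matrix m l F, B * V = X := by
  simp only [mem_span_range_iff_exists_vecMul]
  constructor
  · intro h
    choose B hB using h
    exact ⟨of B, funext fun i => by rw [mul_apply_eq_vecMul, ← hB]; rfl⟩
  · rintro ⟨B, rfl⟩ i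
    exact ⟨B i, (mul_apply_eq_vecMul B V i).symm⟩

theorem span_eq_top_iff_forall_sum_mul_eq_zero [Fintype k] [Fintype l]
    (S : Set (Matrix k l F)) :
    Submodule.span F S = ⊤ ↔
      ∀ M : Matrix k l F, (∀ W ∈ S, ∑ r, ∑ s, M r s * W r s = 0) → M = 0 := by
  classical
  let e : Matrix k l F ≃ₗ[F] Module.Dual F (Matrix k l F) :=
    (LinearEquiv.curry F F k l).symm ≪≫ₗ dotProductEquiv F (k × l) ≪≫ₗ
      (LinearEquiv.curry F F k l).symm.dualMap
  have he (M W : Matrix k l F) : e M W = ∑ r, ∑ s, M r s * W r s := by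
    change (fun p : k × l => M p.1 p.2) ⬝ᵥ (fun p => W p.1 p.2) = _
    rw [dotProduct, Fintype.sum_prod_type]
  simp_rw [← he, ← Submodule.dualAnnihilator_eq_bot_iff, Submodule.eq_bot_iff, ← SetLike.mem_coe,
    Submodule.coe_dualAnnihilator_span, ← e.toEquiv.forall_congr_right]
  simp [Set.subset_def]

theorem transpose_mul_mul_apply [Fintype k] [Fintype l] (U : Matrix k m F) (M : Matrix k l F)
    (V : Matrix l n F) (i : m) (j : n) :
    (Uᵀ * M * V) i j = ∑ r, ∑ s, M r s * (U r i * V s j) := by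
  simp only [mul_apply, transpose_apply, Finset.sum_mul]
  rw [Finset.sum_comm]
  exact Finset.sum_congr rfl fun _ _ => Finset.sum_congr rfl fun _ _ => by ring

theorem transpose_mul_mul_injective [Fintype k] [Fintype l] [Fintype m] [Fintype n]
    [DecidableEq k] [DecidableEq l] {U : Matrix k m F} {R : Matrix m k F} (hR : U * R = 1)
    {V : Matrix l n F} {S : Matrix n l F} (hS : V * S = 1) :
    Function.Injective fun M : Matrix k l F => Uᵀ * M * V := by
  have hinv (M : Matrix k l F) : Rᵀ * (Uᵀ * M * V) * S = M := by
    rw [← Matrix.mul_assoc, ← Matrix.mul_assoc, ← transpose_mul, hR, transpose_one,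
      Matrix.one_mul, Matrix.mul_assoc, hS, Matrix.mul_one]
  intro M N h
  simpa only [hinv] using congrArg (fun X => Rᵀ * X * S) h

end Matrix

section TensorCode

variable {F : Type} [Field F] {k l m n : ℕ} {U : Matrix (Fin k) (Fin m) F}
  {V : Matrix (Fin l) (Fin n) F} {R : Matrix (Fin m) (Fin k) F}

theorem tensorMem_iff_exists_transpose_mul_mul (hR : U * R = 1) {X : Matrix (Fin m) (Fin n) F} :
    tensorMem U V X ↔ ∃ M : Matrix (Fin k) (Fin l) F, Uᵀ * M * V = X := by
  change (∀ j, Xᵀ j ∈ _) ∧ (∀ i, X i ∈ _) ↔ _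
  rw [forall_mem_span_range_iff_exists_mul, forall_mem_span_range_iff_exists_mul]
  constructor
  · rintro ⟨⟨A, hA⟩, ⟨B, rfl⟩⟩
    have hBV : B * V = Uᵀ * Aᵀ := by rw [← transpose_mul, hA, transpose_transpose]
    refine ⟨Rᵀ * B, ?_⟩
    rw [Matrix.mul_assoc, Matrix.mul_assoc, hBV, ← Matrix.mul_assoc Rᵀ, ← Matrix.mul_assoc,
      ← transpose_mul, hR, transpose_one, Matrix.mul_one]
  · rintro ⟨M, rfl⟩
    exact ⟨⟨Vᵀ * Mᵀ, by simp only [transpose_mul, transpose_transpose, Matrix.mul_assoc]⟩,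
      ⟨Uᵀ * M, rfl⟩⟩

theorem correctable_iff_forall_eq_zero (hR : U * R = 1) {S : Matrix (Fin n) (Fin l) F}
    (hS : V * S = 1) (E : Set (Fin m × Fin n)) :
    (∀ X Y : Matrix (Fin m) (Fin n) F, tensorMem U V X → tensorMem U V Y →
        (∀ p : Fin m × Fin n, p ∉ E → X p.1 p.2 = Y p.1 p.2) → X = Y) ↔
      ∀ M : Matrix (Fin k) (Fin l) F,
        (∀ p : Fin m × Fin n, p ∉ E → (Uᵀ * M * V) p.1 p.2 = 0) → M = 0 := by
  simp only [tensorMem_iff_exists_transpose_mul_mul hR]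
  constructor
  · intro h M hM
    refine transpose_mul_mul_injective hR hS (h _ _ ⟨M, rfl⟩ ⟨0, rfl⟩ ?_)
    simpa using hM
  · rintro h X Y ⟨M, rfl⟩ ⟨N, rfl⟩ hMN
    have hMN' : M - N = 0 :=
      h (M - N) fun p hp => by simp [Matrix.mul_sub, Matrix.sub_mul, hMN p hp]
    rw [sub_eq_zero.mp hMN']

end TensorCode

theorem correctable_iff_tensor_span_general {F : Type} [Field F] {m n a b : ℕ}
    (U : Matrix (Fin (m - a)) (Fin m) F) (hU : U.rank = m - a)
    (V : Matrix (Fin (n - b)) (Fin n) F) (hV : V.rank = n - b)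
    (E : Set (Fin m × Fin n)) :
    (∀ X Y : Matrix (Fin m) (Fin n) F, tensorMem U V X → tensorMem U V Y →
        (∀ p : Fin m × Fin n, p ∉ E → X p.1 p.2 = Y p.1 p.2) → X = Y) ↔
      Submodule.span F {W : Matrix (Fin (m - a)) (Fin (n - b)) F |
          ∃ p : Fin m × Fin n, p ∉ E ∧ W = fun r s => U r p.1 * V s p.2} = ⊤ := by
  obtain ⟨R, hR⟩ := exists_mul_eq_one_of_rank_eq_card (hU.trans (Fintype.card_fin _).symm)
  obtain ⟨S, hS⟩ := exists_mul_eq_one_of_rank_eq_card (hV.trans (Fintype.card_fin _).symm)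
  rw [correctable_iff_forall_eq_zero hR hS, span_eq_top_iff_forall_sum_mul_eq_zero]
  refine forall_congr' fun M => imp_congr_left ⟨?_, ?_⟩
  · rintro h W ⟨p, hp, rfl⟩
    rw [← h p hp, transpose_mul_mul_apply]
  · intro h p hp
    rw [transpose_mul_mul_apply]
    exact h _ ⟨p, hp, rfl⟩

/-- An erasure pattern `E ⊆ [m]×[n]` is correctable by the tensor code `C₁ ⊗ C₂`
(restriction to `\bar E` is injective) iff the tensor products `{Uᵢ ⊗ Vⱼ : (i,j) ∉ E}`
of columns of the generator matrices span `F^{m−a} ⊗ F^{n−b}`. -/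
theorem correctable_iff_tensor_span {F : Type} [Field F] {m n a b : ℕ}
    (ha : a ≤ m) (hb : b ≤ n)
    (U : Matrix (Fin (m - a)) (Fin m) F) (hU : U.rank = m - a)
    (V : Matrix (Fin (n - b)) (Fin n) F) (hV : V.rank = n - b)
    (E : Set (Fin m × Fin n)) :
    (∀ X Y : Matrix (Fin m) (Fin n) F, tensorMem U V X → tensorMem U V Y →
        (∀ p : Fin m × Fin n, p ∉ E → X p.1 p.2 = Y p.1 p.2) → X = Y) ↔
      Submodule.span F {W : Matrix (Fin (m - a)) (Fin (n - b)) F |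
          ∃ p : Fin m × Fin n, p ∉ E ∧ W = fun r s => U r p.1 * V s p.2} = ⊤ :=
  correctable_iff_tensor_span_general U hU V hV E
end

section
/- Let C_1 be an (m, m−1) MDS code with generator matrix U (so there is a dual vector λ with all coordinates nonzero and Σ λ_i U_i = 0), and let C_2 have generator matrix V ∈ F^{(n−b)×n}. For E ⊆ [m]×[n] with \bar E = ∪_{i=1}^m {i}×A_i, the pattern E is correctable by C_1 ⊗ C_2 if and only if rank 𝒢_{A_1,...,A_m}[V] = m(n−b), i.e., A_1,...,A_m are V-saturated. -/
open Matrix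

/-!
An `(m, m - 1)` MDS code is the kernel of one parity check `l` with no zero coordinate. As `V` has
independent rows, the codewords of `C₁ ⊗ C₂` are the products `D * V` with `l ᵥ* D = 0`, and `D`
is determined by the codeword. Scaling the rows, `G = diagonal l * D`, the codewords vanishing on
`Ē` correspond exactly to the left kernel vectors `G` of `𝒢[V]`: the identity blocks say
`1 ᵥ* G = 0` and the `V`-blocks say that `G * V` vanishes on `Ē`. So only the zero codeword
vanishes on `Ē` iff the rows of `𝒢[V]` are independent.
-/

section

variable {F : Type} [Field F]

lemma Matrix.linearIndependent_row_iff_rank_eq {ι κ : Type} [Fintype ι] [Fintype κ]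
    (M : Matrix ι κ F) :
    LinearIndependent F M.row ↔ M.rank = Fintype.card ι := by
  refine ⟨LinearIndependent.rank_matrix, fun h => ?_⟩
  rw [linearIndependent_iff_card_eq_finrank_span, Set.finrank, ← M.rank_eq_finrank_span_row, h]

lemma Matrix.exists_ne_zero_mulVec_eq_zero {ι κ : Type} [Fintype ι] [Fintype κ]
    (M : Matrix ι κ F) (h : Fintype.card ι < Fintype.card κ) : ∃ l ≠ 0, M *ᵥ l = 0 := by
  have hker : LinearMap.ker M.mulVecLin ≠ ⊥ :=
    LinearMap.ker_ne_bot_of_finrank_lt (by simpa using h)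
  obtain ⟨l, hl, hl0⟩ := (Submodule.ne_bot_iff _).mp hker
  exact ⟨l, hl0, hl⟩

section MDS

variable {m : ℕ} {U : Matrix (Fin (m - 1)) (Fin m) F}

lemma linearIndependent_col_erase
    (hU : ∀ S : Finset (Fin m), S.card = m - 1 →
      LinearIndependent F (fun a : {x // x ∈ S} => fun r => U r a.1)) (j : Fin m) :
    LinearIndependent F (fun a : {x // x ∈ Finset.univ.erase j} => fun r => U r a.1) :=
  hU _ (by simp [Finset.card_erase_of_mem])

lemma apply_ne_zero_of_mulVec_eq_zero
    (hU : ∀ S : Finset (Fin m), S.card = m - 1 →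
      LinearIndependent F (fun a : {x // x ∈ S} => fun r => U r a.1))
    {l : Fin m → F} (hl0 : l ≠ 0) (hl : U *ᵥ l = 0) (j : Fin m) : l j ≠ 0 := by
  intro hj
  have hrest : ∀ a : {x // x ∈ Finset.univ.erase j}, l a = 0 := by
    refine Fintype.linearIndependent_iff.mp (linearIndependent_col_erase hU j) _ ?_
    ext r
    have hr : ∑ a, l a * U r a = 0 := by
      simpa [mulVec, dotProduct, mul_comm] using congrFun hl r
    rw [← Finset.sum_erase (a := j) _ (by simp [hj])] at hr
    simpa [Finset.sum_apply] using (Finset.sum_coe_sort _ (fun a => l a * U r a)).trans hr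
  refine hl0 (funext fun i => ?_)
  by_cases hij : i = j
  · rw [hij, hj, Pi.zero_apply]
  · exact hrest ⟨i, Finset.mem_erase.mpr ⟨hij, Finset.mem_univ i⟩⟩

lemma finrank_span_rows_eq (hm : 1 ≤ m)
    (hU : ∀ S : Finset (Fin m), S.card = m - 1 →
      LinearIndependent F (fun a : {x // x ∈ S} => fun r => U r a.1)) :
    Module.finrank F (Submodule.span F (Set.range U)) = m - 1 := by
  have hcols := linearIndependent_col_erase hU ⟨0, hm⟩
  have hle : m - 1 ≤ U.rank := by
    rw [U.rank_eq_finrank_span_cols]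
    calc m - 1 = Module.finrank F (Submodule.span F (Set.range
          (fun a : {x // x ∈ Finset.univ.erase (⟨0, hm⟩ : Fin m)} => fun r => U r a.1))) := by
          rw [← Set.finrank, ← linearIndependent_iff_card_eq_finrank_span.mp hcols]
          simp
      _ ≤ _ := Submodule.finrank_mono (Submodule.span_mono (by
          rintro _ ⟨a, rfl⟩
          exact ⟨a.1, rfl⟩))
  refine U.rank_eq_finrank_span_row.symm.trans ?_
  exact le_antisymm (by simpa using U.rank_le_card_height) hle

lemma exists_parity_check (hm : 1 ≤ m)
    (hU : ∀ S : Finset (Fin m), S.card = m - 1 →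
      LinearIndependent F (fun a : {x // x ∈ S} => fun r => U r a.1)) :
    ∃ l : Fin m → F, (∀ i, l i ≠ 0) ∧
      ∀ v, v ∈ Submodule.span F (Set.range U) ↔ l ⬝ᵥ v = 0 := by
  obtain ⟨l, hl0, hl⟩ :=
    U.exists_ne_zero_mulVec_eq_zero (by rw [Fintype.card_fin, Fintype.card_fin]; omega)
  let φ := dotProductEquiv F (Fin m) l
  have hφ : φ ≠ 0 := by simpa [φ] using hl0
  have hle : Submodule.span F (Set.range U) ≤ LinearMap.ker φ := by
    rw [Submodule.span_le]
    rintro _ ⟨r, rfl⟩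
    simpa [φ, mulVec, dotProduct_comm] using congrFun hl r
  have heq : Submodule.span F (Set.range U) = LinearMap.ker φ := by
    refine Submodule.eq_of_le_of_finrank_eq hle ?_
    have := Module.Dual.finrank_ker_add_one_of_ne_zero hφ
    rw [finrank_span_rows_eq hm hU]
    rw [Module.finrank_fintype_fun_eq_card, Fintype.card_fin] at this
    omega
  refine ⟨l, apply_ne_zero_of_mulVec_eq_zero hU hl0 hl, fun v => ?_⟩
  rw [heq]
  rfl

end MDS

section TensorCode

variable {m n ma nb : ℕ} {U : Matrix (Fin ma) (Fin m) F} {V : Matrix (Fin nb) (Fin n) F}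

lemma tensorMem_zero : tensorMem U V 0 :=
  ⟨fun _ => Submodule.zero_mem _, fun _ => Submodule.zero_mem _⟩

lemma tensorMem.sub {X Y : Matrix (Fin m) (Fin n) F} (hX : tensorMem U V X)
    (hY : tensorMem U V Y) : tensorMem U V (X - Y) :=
  ⟨fun j => Submodule.sub_mem _ (hX.1 j) (hY.1 j),
    fun i => Submodule.sub_mem _ (hX.2 i) (hY.2 i)⟩

lemma forall_tensorMem_eq_iff (A : Fin m → Finset (Fin n)) :
    (∀ X Y : Matrix (Fin m) (Fin n) F, tensorMem U V X → tensorMem U V Y →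
        (∀ p : Fin m × Fin n, p.2 ∈ A p.1 → X p.1 p.2 = Y p.1 p.2) → X = Y) ↔
      ∀ X : Matrix (Fin m) (Fin n) F, tensorMem U V X →
        (∀ p : Fin m × Fin n, p.2 ∈ A p.1 → X p.1 p.2 = 0) → X = 0 := by
  refine ⟨fun h X hX hvan => h X 0 hX tensorMem_zero hvan, fun h X Y hX hY hagree => ?_⟩
  refine sub_eq_zero.mp (h _ (hX.sub hY) fun p hp => ?_)
  rw [Matrix.sub_apply, hagree p hp, sub_self]

lemma tensorMem_iff_exists_mul {l : Fin m → F}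
    (hspan : ∀ v, v ∈ Submodule.span F (Set.range U) ↔ l ⬝ᵥ v = 0)
    (hV : LinearIndependent F V.row) (X : Matrix (Fin m) (Fin n) F) :
    tensorMem U V X ↔ ∃ D : Matrix (Fin m) (Fin nb) F, l ᵥ* D = 0 ∧ D * V = X := by
  have hrow : ∀ v, v ∈ Submodule.span F (Set.range V) ↔ ∃ d, d ᵥ* V = v := fun v =>
    (Submodule.ext_iff.mp (range_vecMulLinear V).symm v).trans LinearMap.mem_range
  have hcol : (∀ j, (fun i => X i j) ∈ Submodule.span F (Set.range U)) ↔ l ᵥ* X = 0 := by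
    simp only [hspan, funext_iff]
    rfl
  constructor
  · rintro ⟨hX₁, hX₂⟩
    obtain ⟨D, hD⟩ : ∃ D : Matrix (Fin m) (Fin nb) F, ∀ i, D i ᵥ* V = X i := by
      choose D hD using fun i => (hrow _).mp (hX₂ i)
      exact ⟨D, hD⟩
    have hDX : D * V = X := by
      ext i j
      rw [mul_apply_eq_vecMul, hD]
    refine ⟨D, (vecMul_injective_iff.mpr hV) ?_, hDX⟩
    change (l ᵥ* D) ᵥ* V = 0 ᵥ* V
    rw [vecMul_vecMul, hDX, zero_vecMul]
    exact hcol.mp hX₁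
  · rintro ⟨D, hD, rfl⟩
    refine ⟨hcol.mpr (by rw [← vecMul_vecMul, hD, zero_vecMul]), fun i => (hrow _).mpr ?_⟩
    exact ⟨D i, (mul_apply_eq_vecMul D V i).symm⟩

lemma forall_tensorMem_eq_zero_iff {l : Fin m → F}
    (hspan : ∀ v, v ∈ Submodule.span F (Set.range U) ↔ l ⬝ᵥ v = 0)
    (hV : LinearIndependent F V.row) (A : Fin m → Finset (Fin n)) :
    (∀ X : Matrix (Fin m) (Fin n) F, tensorMem U V X →
        (∀ p : Fin m × Fin n, p.2 ∈ A p.1 → X p.1 p.2 = 0) → X = 0) ↔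
      ∀ D : Matrix (Fin m) (Fin nb) F, l ᵥ* D = 0 →
        (∀ p : Fin m × Fin n, p.2 ∈ A p.1 → (D * V) p.1 p.2 = 0) → D = 0 := by
  simp only [tensorMem_iff_exists_mul hspan hV]
  constructor
  · intro h D hD hvan
    ext i r
    have hDV : D i ᵥ* V = 0 ᵥ* V := by
      rw [← mul_apply_eq_vecMul, h _ ⟨D, hD, rfl⟩ hvan, zero_vecMul]
      rfl
    exact congrFun (vecMul_injective_iff.mpr hV hDV) r
  · rintro h _ ⟨D, hD, rfl⟩ hvan
    rw [h D hD hvan, Matrix.zero_mul]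

end TensorCode

section Gmat

variable {k n m : ℕ} (V : Matrix (Fin k) (Fin n) F) (A : Fin m → Finset (Fin n))

lemma vecMul_gmat_eq_zero_iff (G : Matrix (Fin m) (Fin k) F) :
    (fun p : Fin m × Fin k => G p.1 p.2) ᵥ* Gmat V A = 0 ↔
      1 ᵥ* G = 0 ∧ ∀ p : Fin m × Fin n, p.2 ∈ A p.1 → (G * V) p.1 p.2 = 0 := by
  simp only [funext_iff, Sum.forall, Sigma.forall, Subtype.forall, Prod.forall, Pi.zero_apply,
    vecMul, dotProduct, Fintype.sum_prod_type, Gmat, of_apply, mul_apply, mul_ite, mul_zero,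
    mul_one, Pi.one_apply, one_mul, Finset.sum_ite_irrel, Finset.sum_const_zero,
    Finset.sum_ite_eq', Finset.mem_univ, if_true]

lemma linearIndependent_row_gmat_iff :
    LinearIndependent F (Gmat V A).row ↔ ∀ G : Matrix (Fin m) (Fin k) F, 1 ᵥ* G = 0 →
      (∀ p : Fin m × Fin n, p.2 ∈ A p.1 → (G * V) p.1 p.2 = 0) → G = 0 := by
  rw [← vecMul_injective_iff, ← coe_vecMulLinear, injective_iff_map_eq_zero]
  constructor
  · intro h G hG hvan
    have := h _ ((vecMul_gmat_eq_zero_iff V A G).mpr ⟨hG, hvan⟩)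
    ext i r
    exact congrFun this (i, r)
  · intro h g hg
    obtain ⟨hcols, hvan⟩ := (vecMul_gmat_eq_zero_iff V A (of fun i r => g (i, r))).mp hg
    exact funext fun p => congrFun₂ (h _ hcols hvan) p.1 p.2

lemma forall_eq_zero_iff_of_scale_rows {l : Fin m → F} (hl : ∀ i, l i ≠ 0) :
    (∀ D : Matrix (Fin m) (Fin k) F, l ᵥ* D = 0 →
        (∀ p : Fin m × Fin n, p.2 ∈ A p.1 → (D * V) p.1 p.2 = 0) → D = 0) ↔
      ∀ G : Matrix (Fin m) (Fin k) F, 1 ᵥ* G = 0 →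
        (∀ p : Fin m × Fin n, p.2 ∈ A p.1 → (G * V) p.1 p.2 = 0) → G = 0 := by
  have hcols : ∀ D : Matrix (Fin m) (Fin k) F, 1 ᵥ* (diagonal l * D) = l ᵥ* D := fun D => by
    rw [← vecMul_vecMul]
    congr
    ext i
    simp [vecMul_diagonal]
  have hentries : ∀ (D : Matrix (Fin m) (Fin k) F) i j,
      (diagonal l * D * V) i j = l i * (D * V) i j := fun D i j => by
    rw [Matrix.mul_assoc, diagonal_mul]
  have hunscale : ∀ G : Matrix (Fin m) (Fin k) F, diagonal l * (diagonal l⁻¹ * G) = G :=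
      fun G => by
    rw [← Matrix.mul_assoc, diagonal_mul_diagonal]
    simp [mul_inv_cancel₀ (hl _)]
  constructor
  · intro h G hG hGV
    rw [← hunscale G] at hG hGV ⊢
    rw [hcols] at hG
    simp only [hentries, mul_eq_zero, hl, false_or] at hGV
    rw [h _ hG hGV, Matrix.mul_zero]
  · intro h D hD hDV
    have hD0 := h (diagonal l * D) (by rwa [hcols]) fun p hp => by
      rw [hentries, hDV p hp, mul_zero]
    ext i r
    simpa [diagonal_mul, hl] using congrFun₂ hD0 i r

end Gmat

end

theorem correctable_iff_saturated_general {F : Type} [Field F] {m n b : ℕ}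
    (hm : 1 ≤ m)
    (U : Matrix (Fin (m - 1)) (Fin m) F)
    (hU : ∀ S : Finset (Fin m), S.card = m - 1 →
      LinearIndependent F (fun a : {x // x ∈ S} => fun r => U r a.1))
    (V : Matrix (Fin (n - b)) (Fin n) F) (hV : V.rank = n - b)
    (A : Fin m → Finset (Fin n)) :
    (∀ X Y : Matrix (Fin m) (Fin n) F, tensorMem U V X → tensorMem U V Y →
        (∀ p : Fin m × Fin n, p.2 ∈ A p.1 → X p.1 p.2 = Y p.1 p.2) → X = Y) ↔
      (Gmat V A).rank = m * (n - b) := by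
  obtain ⟨l, hl, hspan⟩ := exists_parity_check hm hU
  have hVrows : LinearIndependent F V.row := by
    rw [V.linearIndependent_row_iff_rank_eq, hV, Fintype.card_fin]
  rw [forall_tensorMem_eq_iff, forall_tensorMem_eq_zero_iff hspan hVrows,
    forall_eq_zero_iff_of_scale_rows V A hl, ← linearIndependent_row_gmat_iff,
    (Gmat V A).linearIndependent_row_iff_rank_eq, Fintype.card_prod, Fintype.card_fin,
    Fintype.card_fin]

/-- For `C₁` an `(m, m−1)` MDS code and `C₂` with generator `V`, the erasure pattern `E` with
`\bar E = ∪ᵢ {i} × Aᵢ` is correctable by `C₁ ⊗ C₂` iff `rank 𝒢_{A_1,…,A_m}[V] = m(n−b)`,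
i.e. the sets `A_1,…,A_m` are `V`-saturated. -/
theorem correctable_iff_saturated {F : Type} [Field F] {m n b : ℕ}
    (hm : 1 ≤ m) (hb : b ≤ n)
    (U : Matrix (Fin (m - 1)) (Fin m) F)
    (hU : ∀ S : Finset (Fin m), S.card = m - 1 →
      LinearIndependent F (fun a : {x // x ∈ S} => fun r => U r a.1))
    (V : Matrix (Fin (n - b)) (Fin n) F) (hV : V.rank = n - b)
    (A : Fin m → Finset (Fin n)) :
    (∀ X Y : Matrix (Fin m) (Fin n) F, tensorMem U V X → tensorMem U V Y →
        (∀ p : Fin m × Fin n, p.2 ∈ A p.1 → X p.1 p.2 = Y p.1 p.2) → X = Y) ↔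
      (Gmat V A).rank = m * (n - b) :=
  correctable_iff_saturated_general hm U hU V hV A
end

section
/- Let V ∈ F^{k×n} be such that every k+d columns span F^k (d ≤ n−k). Then for all A_1, A_2 ⊆ [n] with the (k+d)-dimensional saturation property, A_1, A_2 are V-saturated, i.e., rank 𝒢_{A_1,A_2}[V] = 2k. Conversely, if for all A_1, A_2 with the (k+d)-dimensional saturation property one has rank 𝒢_{A_1,A_2}[V] = 2k, then every k+d columns of V span F^k. -/
/-!
The left kernel of `𝒢_{A₁,A₂}[V]` consists of the pairs `(y, -y)` with `y` orthogonal to every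
column of `V` indexed by `A₁ ∪ A₂`. Hence `𝒢_{A₁,A₂}[V]` has full row rank `2k` exactly when these
columns span `F^k`; and when `|A₁ ∪ A₂| ≥ k + d` they contain `k + d` columns, while `A₁ = A₂ = A`
recovers the spanning condition for a single set `A`.
-/

open Matrix

theorem Matrix.rank_eq_card_height_iff {m n F : Type*} [Fintype m] [Fintype n] [Field F]
    (M : Matrix m n F) : M.rank = Fintype.card m ↔ ∀ g : m → F, g ᵥ* M = 0 → g = 0 := by
  rw [rank_eq_finrank_span_row, ← Set.finrank, eq_comm,
    ← linearIndependent_iff_card_eq_finrank_span, ← vecMul_injective_iff, ← coe_vecMulLinear,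
    injective_iff_map_eq_zero]
  rfl

section colSpan

variable {F : Type} [Field F] {k n : ℕ} (V : Matrix (Fin k) (Fin n) F)

theorem colSpan_mono {S T : Finset (Fin n)} (h : S ⊆ T) : colSpan V S ≤ colSpan V T :=
  Submodule.span_mono (Set.image_mono (Finset.coe_subset.mpr h))

theorem colSpan_eq_span_cols_submatrix (S : Finset (Fin n)) :
    colSpan V S = Submodule.span F (Set.range (V.submatrix id ((↑) : S → Fin n)).col) := by
  rw [colSpan, Set.image_eq_range]
  rfl

theorem colSpan_eq_top_iff (S : Finset (Fin n)) :
    colSpan V S = ⊤ ↔ ∀ y : Fin k → F, (∀ j ∈ S, (y ᵥ* V) j = 0) → y = 0 := by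
  have h := (V.submatrix id ((↑) : S → Fin n)).rank_eq_card_height_iff
  rw [rank_eq_finrank_span_cols, ← colSpan_eq_span_cols_submatrix, Fintype.card_fin] at h
  rw [Submodule.eq_top_iff_finrank_eq, Module.finrank_fin_fun, h]
  simp only [funext_iff, Pi.zero_apply, Subtype.forall]
  rfl

end colSpan

section Gmat

variable {F : Type} [Field F] {k n ℓ : ℕ} (V : Matrix (Fin k) (Fin n) F)

theorem vecMul_Gmat_eq_zero_iff (A : Fin ℓ → Finset (Fin n)) (g : Fin ℓ × Fin k → F) :
    g ᵥ* Gmat V A = 0 ↔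
      ∑ i, Function.curry g i = 0 ∧ ∀ i, ∀ j ∈ A i, (Function.curry g i ᵥ* V) j = 0 := by
  have h_inl (c : Fin k) : (g ᵥ* Gmat V A) (Sum.inl c) = ∑ i, g (i, c) := by
    simp [vecMul, dotProduct, Gmat, Fintype.sum_prod_type]
  have h_inr (i : Fin ℓ) (j : A i) :
      (g ᵥ* Gmat V A) (Sum.inr ⟨i, j⟩) = (Function.curry g i ᵥ* V) j := by
    simp [vecMul, dotProduct, Gmat, Fintype.sum_prod_type]
  simp only [funext_iff, Sum.forall, Sigma.forall, Subtype.forall, Pi.zero_apply, h_inl, h_inr,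
    Finset.sum_apply, Function.curry_apply]

theorem rank_Gmat_pair_eq_iff (A₁ A₂ : Finset (Fin n)) :
    (Gmat V ![A₁, A₂]).rank = 2 * k ↔ colSpan V (A₁ ∪ A₂) = ⊤ := by
  have h_card : Fintype.card (Fin 2 × Fin k) = 2 * k := by simp
  rw [← h_card, rank_eq_card_height_iff, colSpan_eq_top_iff]
  simp only [vecMul_Gmat_eq_zero_iff, Fin.sum_univ_two, Fin.forall_fin_two, Matrix.cons_val_zero,
    Matrix.cons_val_one, Finset.mem_union]
  constructor
  · intro H y hy
    have := H (Function.uncurry ![y, -y]) ⟨?_, ?_, ?_⟩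
    · funext r
      simpa using congr_fun this (0, r)
    · simp
    · simpa using fun j hj => hy j (Or.inl hj)
    · simpa [neg_vecMul] using fun j hj => hy j (Or.inr hj)
  · rintro H g ⟨h_sum, h₁, h₂⟩
    have h_neg : Function.curry g 1 = -Function.curry g 0 := eq_neg_of_add_eq_zero_right h_sum
    have h_zero : Function.curry g 0 = 0 := H _ fun j hj =>
      hj.elim (h₁ j) fun hj => by simpa [h_neg, neg_vecMul] using h₂ j hj
    ext ⟨i, r⟩
    fin_cases i
    · exact congr_fun h_zero r
    · simpa [h_zero] using congr_fun h_neg r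

end Gmat

theorem span_iff_pair_saturated_general {F : Type} [Field F] {k n d : ℕ}
    (V : Matrix (Fin k) (Fin n) F) :
    (∀ A : Finset (Fin n), A.card = k + d → colSpan V A = ⊤) ↔
      (∀ A₁ A₂ : Finset (Fin n), k + d ≤ (A₁ ∪ A₂).card →
        (Gmat V ![A₁, A₂]).rank = 2 * k) := by
  simp only [rank_Gmat_pair_eq_iff]
  constructor
  · intro h A₁ A₂ h_card
    obtain ⟨B, hB, hB_card⟩ := Finset.exists_subset_card_eq h_card
    exact top_le_iff.mp (h B hB_card ▸ colSpan_mono V hB)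
  · intro h A hA
    simpa using h A A (by rw [Finset.union_self, hA])

/-- Every `k + d` columns of `V` span `F^k` iff for all `A₁, A₂ ⊆ [n]` with the
`(k+d)`-dimensional saturation property (combinatorially: `|A₁ ∪ A₂| ≥ k + d`),
`A₁, A₂` are `V`-saturated, i.e. `rank 𝒢_{A₁,A₂}[V] = 2k`. -/
theorem span_iff_pair_saturated {F : Type} [Field F] {k n d : ℕ}
    (hk : k ≤ n) (hd : d ≤ n - k) (V : Matrix (Fin k) (Fin n) F) :
    (∀ A : Finset (Fin n), A.card = k + d → colSpan V A = ⊤) ↔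
      (∀ A₁ A₂ : Finset (Fin n), k + d ≤ (A₁ ∪ A₂).card →
        (Gmat V ![A₁, A₂]).rank = 2 * k) :=
  span_iff_pair_saturated_general V
end

section
/- Let V ∈ F^{k×n} and let W be a generic k×n matrix (entries algebraically independent over the prime field). Suppose that for all A_1,...,A_ℓ ⊆ [n] such that 𝒢_{A_1,...,A_ℓ}[W] has full row rank ℓk, the matrix 𝒢_{A_1,...,A_ℓ}[V] also has full row rank ℓk. Then for all A_1,...,A_ℓ ⊆ [n], rank 𝒢_{A_1,...,A_ℓ}[V] = rank 𝒢_{A_1,...,A_ℓ}[W]. -/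
/-!
Adding one column to `𝒢_A[V]` raises its rank by at most one, while for the generic `W` a
family `A` with `rank 𝒢_A[W] < ℓk` can always be enlarged by a single column that raises the
rank: since `k ≤ n`, already `V = [I_k | 0]` makes `𝒢_{[n],…,[n]}[V]` of full row rank `ℓk`,
hence so does `W`, and some column of `𝒢_{[n],…,[n]}[W]` lies outside the span of the columns
of `𝒢_A[W]`. Argue by induction on `ℓk - rank 𝒢_A[W]`. At full rank
the hypothesis applies. Otherwise enlarge `A` to `B` by such a column; by induction
`rank 𝒢_B[V] = rank 𝒢_B[W] > rank 𝒢_A[W]`, hence `rank 𝒢_A[V] ≥ rank 𝒢_B[V] - 1 ≥ rank 𝒢_A[W]`,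
and genericity of `W` gives the reverse inequality.
-/

open Matrix

open Submodule Module

namespace Gmat

variable {F : Type} [Field F] {k n ℓ : ℕ}

def identityCol (c : Fin k) : Fin ℓ × Fin k → F := fun p => if p.2 = c then 1 else 0

def blockCol (V : Matrix (Fin k) (Fin n) F) (i : Fin ℓ) (x : Fin n) : Fin ℓ × Fin k → F :=
  fun p => if p.1 = i then V p.2 x else 0

def cols (V : Matrix (Fin k) (Fin n) F) (A : Fin ℓ → Finset (Fin n)) :
    Set (Fin ℓ × Fin k → F) :=
  Set.range identityCol ∪ ⋃ i, blockCol V i '' A i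

theorem range_col (V : Matrix (Fin k) (Fin n) F) (A : Fin ℓ → Finset (Fin n)) :
    Set.range (Gmat V A).col = cols V A := by
  ext v
  constructor
  · rintro ⟨c | ⟨i, x, hx⟩, rfl⟩
    · exact Or.inl ⟨c, rfl⟩
    · exact Or.inr (Set.mem_iUnion.2 ⟨i, x, hx, rfl⟩)
  · rintro (⟨c, rfl⟩ | hv)
    · exact ⟨Sum.inl c, rfl⟩
    · obtain ⟨i, x, hx, rfl⟩ := Set.mem_iUnion.1 hv
      exact ⟨Sum.inr ⟨i, x, hx⟩, rfl⟩

theorem rank_eq_finrank_span_cols (V : Matrix (Fin k) (Fin n) F) (A : Fin ℓ → Finset (Fin n)) :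
    (Gmat V A).rank = finrank F (span F (cols V A)) := by
  rw [Matrix.rank_eq_finrank_span_cols, range_col]

theorem rank_le (V : Matrix (Fin k) (Fin n) F) (A : Fin ℓ → Finset (Fin n)) :
    (Gmat V A).rank ≤ ℓ * k := by
  simpa using rank_le_card_height (Gmat V A)

theorem cols_update_insert (V : Matrix (Fin k) (Fin n) F) (A : Fin ℓ → Finset (Fin n))
    (i : Fin ℓ) (x : Fin n) :
    cols V (Function.update A i (insert x (A i))) = insert (blockCol V i x) (cols V A) := by
  ext v
  simp only [cols, Set.mem_union, Set.mem_iUnion, Set.mem_image, Set.mem_insert_iff,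
    Finset.mem_coe, Function.update_apply]
  grind

theorem rank_update_insert_le (V : Matrix (Fin k) (Fin n) F) (A : Fin ℓ → Finset (Fin n))
    (i : Fin ℓ) (x : Fin n) :
    (Gmat V (Function.update A i (insert x (A i)))).rank ≤ (Gmat V A).rank + 1 := by
  rw [rank_eq_finrank_span_cols, rank_eq_finrank_span_cols, cols_update_insert, span_insert]
  calc finrank F ↥(F ∙ blockCol V i x ⊔ span F (cols V A))
      ≤ finrank F (F ∙ blockCol V i x) + finrank F (span F (cols V A)) :=
        finrank_add_le_finrank_add_finrank _ _
    _ ≤ 1 + finrank F (span F (cols V A)) := by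
        gcongr
        simpa using finrank_span_le_card ({blockCol V i x} : Set _)
    _ = _ := add_comm _ _

theorem exists_rank_lt_rank_update_insert (V : Matrix (Fin k) (Fin n) F)
    (A : Fin ℓ → Finset (Fin n))
    (h : (Gmat V A).rank < (Gmat V fun _ : Fin ℓ => Finset.univ).rank) :
    ∃ i x, (Gmat V A).rank < (Gmat V (Function.update A i (insert x (A i)))).rank := by
  by_contra! hsat
  have hmem : ∀ i x, blockCol V i x ∈ span F (cols V A) := by
    intro i x
    by_contra hx
    have hlt : span F (cols V A) < span F (insert (blockCol V i x) (cols V A)) :=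
      (span_mono (Set.subset_insert _ _)).lt_of_ne fun heq =>
        hx (heq ▸ subset_span (Set.mem_insert _ _))
    have := hsat i x
    rw [rank_eq_finrank_span_cols, rank_eq_finrank_span_cols, cols_update_insert] at this
    exact (finrank_lt_finrank_of_lt hlt).not_ge this
  have hspan : span F (cols V fun _ : Fin ℓ => Finset.univ) ≤ span F (cols V A) := by
    rw [span_le]
    rintro v (hv | hv)
    · exact subset_span (Or.inl hv)
    · obtain ⟨i, x, -, rfl⟩ := Set.mem_iUnion.1 hv
      exact hmem i x
  rw [rank_eq_finrank_span_cols, rank_eq_finrank_span_cols] at h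
  exact (finrank_mono hspan).not_gt h

theorem blockCol_submatrix_one_castLE (hk : k ≤ n) (i : Fin ℓ) (c : Fin k) :
    blockCol ((1 : Matrix (Fin n) (Fin n) F).submatrix (Fin.castLE hk) id) i (Fin.castLE hk c) =
      Pi.single (i, c) 1 := by
  ext ⟨j, r⟩
  simp only [blockCol, submatrix_apply, id_eq, one_apply, (Fin.castLE_injective hk).eq_iff,
    Pi.single_apply, Prod.mk.injEq]
  split_ifs <;> tauto

theorem rank_submatrix_one_castLE_univ (hk : k ≤ n) :
    (Gmat ((1 : Matrix (Fin n) (Fin n) F).submatrix (Fin.castLE hk) id)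
      fun _ : Fin ℓ => Finset.univ).rank = ℓ * k := by
  have htop : span F (cols ((1 : Matrix (Fin n) (Fin n) F).submatrix (Fin.castLE hk) id)
      fun _ : Fin ℓ => Finset.univ) = ⊤ := by
    refine eq_top_iff.2 ((Pi.basisFun F (Fin ℓ × Fin k)).span_eq.ge.trans (span_mono ?_))
    rintro _ ⟨⟨i, c⟩, rfl⟩
    refine Or.inr (Set.mem_iUnion.2 ⟨i, Fin.castLE hk c, Finset.mem_coe.2 (Finset.mem_univ _), ?_⟩)
    simp [blockCol_submatrix_one_castLE]
  rw [rank_eq_finrank_span_cols, htop, finrank_top, finrank_fintype_fun_eq_card,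
    Fintype.card_prod, Fintype.card_fin, Fintype.card_fin]

end Gmat

open Gmat

/-- Let `W` be a generic `k × n` matrix, formalized as maximizing `rank 𝒢_{A_1,…,A_ℓ}[·]`
over all `k × n` matrices for every family of sets. If `𝒢_{A_1,…,A_ℓ}[V]` has full row rank
`ℓk` whenever `𝒢_{A_1,…,A_ℓ}[W]` does, then `rank 𝒢_{A_1,…,A_ℓ}[V] = rank 𝒢_{A_1,…,A_ℓ}[W]`
for all `A_1,…,A_ℓ ⊆ [n]`. -/
theorem rank_eq_of_full_row_rank_transfer {F : Type} [Field F] {k n ℓ : ℕ} (hk : k ≤ n)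
    (V W : Matrix (Fin k) (Fin n) F)
    (hgen : ∀ (A : Fin ℓ → Finset (Fin n)) (V' : Matrix (Fin k) (Fin n) F),
      (Gmat V' A).rank ≤ (Gmat W A).rank)
    (hfull : ∀ A : Fin ℓ → Finset (Fin n),
      (Gmat W A).rank = ℓ * k → (Gmat V A).rank = ℓ * k) :
    ∀ A : Fin ℓ → Finset (Fin n), (Gmat V A).rank = (Gmat W A).rank := by
  have hW_univ : (Gmat W fun _ : Fin ℓ => Finset.univ).rank = ℓ * k :=
    (rank_le W _).antisymm ((rank_submatrix_one_castLE_univ hk).symm.le.trans (hgen _ _))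
  intro A
  induction hd : ℓ * k - (Gmat W A).rank using Nat.strong_induction_on generalizing A with
  | _ d ih =>
    obtain hW_full | hW_lt := (rank_le W A).eq_or_lt
    · rw [hfull A hW_full, hW_full]
    obtain ⟨i, x, hW_step⟩ := exists_rank_lt_rank_update_insert W A (hW_univ ▸ hW_lt)
    set B := Function.update A i (insert x (A i))
    have hV_eq_W : (Gmat V B).rank = (Gmat W B).rank := ih _ (by have := rank_le W B; omega) B rfl
    have hV_step : (Gmat V B).rank ≤ (Gmat V A).rank + 1 := rank_update_insert_le V A i x
    have hV_le := hgen A V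
    omega
end

section
/- Let E ⊆ [m]×[n] be an erasure pattern correctable by some (m,n,a,b) tensor code C_1 ⊗ C_2 with C_1 a generic (m,m−a) code and C_2 a generic (n,n−b) code. For A ⊆ [m] with |A| ≤ m−a, the pattern E' = E ∪ (A × [n]) is correctable by a generic (m,m−a−|A|) ⊗ (n,n−b) tensor code. -/
open Matrix

/-- If the pattern `E` is correctable by a generic `(m,n,a,b)` tensor code (i.e., over an
infinite field, there exist generator matrices `U, V` such that the tensors
`{Uᵢ ⊗ Vⱼ : (i,j) ∉ E}` span), then for `A ⊆ [m]` with `|A| ≤ m − a` the enlarged pattern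
`E' = E ∪ (A × [n])` is correctable by a generic `(m, m−a−|A|) ⊗ (n, n−b)` tensor code. -/
theorem pad_correctable {F : Type} [Field F] [Infinite F] {m n a b : ℕ}
    (ha : a ≤ m) (hb : b ≤ n) (E : Set (Fin m × Fin n))
    (hcorr : ∃ (U : Matrix (Fin (m - a)) (Fin m) F) (V : Matrix (Fin (n - b)) (Fin n) F),
      Submodule.span F {W : Matrix (Fin (m - a)) (Fin (n - b)) F |
        ∃ p : Fin m × Fin n, p ∉ E ∧ W = fun r s => U r p.1 * V s p.2} = ⊤)
    (A : Finset (Fin m)) (hA : A.card ≤ m - a) :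
    ∃ (U' : Matrix (Fin (m - a - A.card)) (Fin m) F)
      (V' : Matrix (Fin (n - b)) (Fin n) F),
      Submodule.span F {W : Matrix (Fin (m - a - A.card)) (Fin (n - b)) F |
        ∃ p : Fin m × Fin n, p ∉ (E ∪ {p | p.1 ∈ A}) ∧
          W = fun r s => U' r p.1 * V' s p.2} = ⊤ := by
  classical
  obtain ⟨U, V, hUV⟩ := hcorr
  -- the columns of U
  let col : Fin m → (Fin (m - a) → F) := fun i r => U r i
  -- the span of the columns indexed by A
  let S : Submodule F (Fin (m - a) → F) :=
    Submodule.span F ((A.image col : Finset _) : Set _)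
  have hSrank : Module.finrank F S ≤ A.card :=
    le_trans (finrank_span_finset_le_card _) Finset.card_image_le
  have hq : Module.finrank F ((Fin (m - a) → F) ⧸ S) + Module.finrank F S = m - a := by
    rw [Submodule.finrank_quotient_add_finrank, Module.finrank_fin_fun]
  have hdle : m - a - A.card ≤ Module.finrank F ((Fin (m - a) → F) ⧸ S) := by omega
  let e := Module.finBasis F ((Fin (m - a) → F) ⧸ S)
  let restr : (Fin (Module.finrank F ((Fin (m - a) → F) ⧸ S)) → F) →ₗ[F]
      (Fin (m - a - A.card) → F) := LinearMap.funLeft F F (Fin.castLE hdle)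
  let π : (Fin (m - a) → F) →ₗ[F] (Fin (m - a - A.card) → F) :=
    restr ∘ₗ (e.equivFun.toLinearMap) ∘ₗ S.mkQ
  have hrestr : Function.Surjective restr :=
    LinearMap.funLeft_surjective_of_injective F F _ (Fin.castLE_injective hdle)
  have hπsurj : Function.Surjective π :=
    hrestr.comp (e.equivFun.surjective.comp S.mkQ_surjective)
  have hker : ∀ i ∈ A, π (col i) = 0 := by
    intro i hi
    have : col i ∈ S := Submodule.subset_span (by
      simp only [Finset.coe_image, Set.mem_image, Finset.mem_coe]
      exact ⟨i, hi, rfl⟩)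
    have h0 : S.mkQ (col i) = 0 := (Submodule.Quotient.mk_eq_zero S).mpr this
    simp only [π, LinearMap.comp_apply, h0, map_zero]
  -- the linear map applying π to each column of a matrix
  let T : Matrix (Fin (m - a)) (Fin (n - b)) F →ₗ[F]
      Matrix (Fin (m - a - A.card)) (Fin (n - b)) F :=
    { toFun := fun W r s => π (fun t => W t s) r
      map_add' := by
        intro W W'
        funext r s
        have h : (fun t => (W + W') t s) = (fun t => W t s) + (fun t => W' t s) := rfl
        show π (fun t => (W + W') t s) r = _
        rw [h, map_add]
        rfl
      map_smul' := by
        intro c W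
        funext r s
        have h : (fun t => (c • W) t s) = c • (fun t => W t s) := rfl
        show π (fun t => (c • W) t s) r = _
        rw [h, _root_.map_smul]
        rfl }
  have hTsurj : Function.Surjective T := by
    intro M
    refine ⟨fun t s => Function.surjInv hπsurj (fun r => M r s) t, ?_⟩
    funext r s
    show π (fun t => Function.surjInv hπsurj (fun r => M r s) t) r = M r s
    have : (fun t => Function.surjInv hπsurj (fun r => M r s) t)
        = Function.surjInv hπsurj (fun r => M r s) := rfl
    rw [this, Function.surjInv_eq hπsurj]
  refine ⟨fun r i => π (col i) r, V, ?_⟩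
  have hmap : Submodule.span F
      (T '' {W : Matrix (Fin (m - a)) (Fin (n - b)) F |
        ∃ p : Fin m × Fin n, p ∉ E ∧ W = fun r s => U r p.1 * V s p.2}) = ⊤ := by
    rw [Submodule.span_image, hUV, Submodule.map_top, LinearMap.range_eq_top.mpr hTsurj]
  rw [eq_top_iff, ← hmap]
  apply Submodule.span_le.mpr
  rintro x ⟨W, ⟨p, hpE, rfl⟩, rfl⟩
  have hcolsmul : ∀ (s : Fin (n - b)),
      π (fun t => U t p.1 * V s p.2) = V s p.2 • π (col p.1) := by
    intro s
    have h : (fun t => U t p.1 * V s p.2) = V s p.2 • col p.1 := by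
      funext t; simp [col, mul_comm]
    rw [h, _root_.map_smul]
  by_cases hmem : p.1 ∈ A
  · have h0 : T (fun r s => U r p.1 * V s p.2) = 0 := by
      funext r s
      show π (fun t => U t p.1 * V s p.2) r = 0
      rw [hcolsmul s, hker p.1 hmem]
      simp
    rw [h0]
    exact Submodule.zero_mem _
  · apply Submodule.subset_span
    refine ⟨p, ?_, ?_⟩
    · intro hcontra
      rcases hcontra with h | h
      · exact hpE h
      · exact hmem h
    · funext r s
      show π (fun t => U t p.1 * V s p.2) r = π (col p.1) r * V s p.2
      rw [hcolsmul s]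
      simp [mul_comm]
end
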